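/- For every integer n ≥ 0, every integer k, and every real x, the following three identities hold: (1) Σ_{m=0}^{n} S_1(n,m,x) · B_{m,p,q}^{(k)}(x) = n!/[n+1]_{p,q}^k; (2) Σ_{m=0}^{n} S_2(n,m,x) · C_{m,p,q}^{(k)}(x) = 1/[n+1]_{p,q}^k; (3) Σ_{m=0}^{n} S_2(n,m,−x) · Ĉ_{m,p,q}^{(k)}(x) = (−1)^n/[n+1]_{p,q}^k. -/

import Mathlib

open Finset

/-- The `(p,q)`-integer `[m]_{p,q} = (p^m - q^m)/(p - q)`. -/
noncomputable def pqInt (p q : ℝ) (m : ℕ) : ℝ := (p ^ m - q ^ m) / (p - q)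

/-- The exponential generating function `∑ f n * t^n / n!` of a sequence `f`. -/
noncomputable def egf (f : ℕ → ℝ) : PowerSeries ℝ :=
  PowerSeries.mk fun n => f n / n.factorial

/-- The power series `∑_{m ≥ 0} (1 - e^{-t})^m / [m+1]_{p,q}^k`
(which equals `Li_{k,p,q}(1 - e^{-t}) / (1 - e^{-t})`).
Since `(1 - e^{-t})^m` has order at least `m`, the `n`-th coefficient only
receives contributions from `m ≤ n`. -/
noncomputable def pqBernSeries (p q : ℝ) (k : ℤ) : PowerSeries ℝ :=
  PowerSeries.mk fun n =>
    ∑ m ∈ Finset.range (n + 1),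
      PowerSeries.coeff n ((1 - PowerSeries.rescale (-1) (PowerSeries.exp ℝ)) ^ m) /
        pqInt p q (m + 1) ^ k

/-- The unsigned Stirling numbers of the first kind, defined by the recurrence
`S1(n+1, m+1) = n * S1(n, m+1) + S1(n, m)`, so that
`x(x+1)⋯(x+n-1) = ∑_{m=0}^{n} S1(n,m) x^m`. -/
def stirling1 : ℕ → ℕ → ℕ
  | 0, 0 => 1
  | 0, _ + 1 => 0
  | _ + 1, 0 => 0
  | n + 1, m + 1 => n * stirling1 n (m + 1) + stirling1 n m

/-- Carlitz's weighted Stirling numbers of the first kind,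
`S1(n,m,x) = ∑_{i=0}^{n-m} binom(m+i,i) S1(n,m+i) x^i`. -/
noncomputable def stirling1W (n m : ℕ) (x : ℝ) : ℝ :=
  ∑ i ∈ Finset.range (n - m + 1), ((m + i).choose i : ℝ) * (stirling1 n (m + i) : ℝ) * x ^ i

/-- Carlitz's weighted Stirling numbers of the second kind,
`S2(n,m,x) = (1/m!) ∑_{j=0}^{m} (-1)^(m-j) binom(m,j) (x+j)^n`. -/
noncomputable def stirling2W (n m : ℕ) (x : ℝ) : ℝ :=
  (1 / (m.factorial : ℝ)) *
    ∑ j ∈ Finset.range (m + 1), (-1 : ℝ) ^ (m - j) * (m.choose j : ℝ) * (x + j) ^ n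

/-- The `(p,q)`-poly-Cauchy polynomials of the first kind. -/
noncomputable def pqCauchy1 (p q : ℝ) (k : ℤ) (x : ℝ) (n : ℕ) : ℝ :=
  ∑ m ∈ Finset.range (n + 1),
    (-1 : ℝ) ^ (n - m) * (stirling1 n m : ℝ) *
      ∑ l ∈ Finset.range (m + 1),
        (m.choose l : ℝ) * (-x) ^ l / pqInt p q (m - l + 1) ^ k

/-- The `(p,q)`-poly-Cauchy polynomials of the second kind. -/
noncomputable def pqCauchy2 (p q : ℝ) (k : ℤ) (x : ℝ) (n : ℕ) : ℝ :=
  (-1 : ℝ) ^ n *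
    ∑ m ∈ Finset.range (n + 1),
      (stirling1 n m : ℝ) *
        ∑ l ∈ Finset.range (m + 1),
          (m.choose l : ℝ) * (-x) ^ l / pqInt p q (m - l + 1) ^ k


/-!
Write `(X - x)_m = (X - x)(X - x - 1)⋯(X - x - m + 1)` for the shifted falling factorial.
Up to the sign `(-1)^(m+r)`, `S1(m,r,x)` is its coefficient of `X^r`, because the rising factorial
has the unsigned Stirling numbers as coefficients and `S1(·,·,x)` is their Taylor shift by `x`.
In the other direction, `m! S2(n,m,x)` is the `m`-th forward difference of `t ↦ (x+t)^n` at `0`,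
so the Gregory–Newton formula gives `X^n = ∑ S2(n,m,x) (X - x)_m`. Hence the triangular matrices
`(S2(n,m,x))` and `((-1)^(m+r) S1(m,r,x))` are inverse to each other, in both orders.

After reindexing its double sum, the Cauchy polynomial `C_n(x)` is `∑ (-1)^(n+r) S1(n,r,x) a_r`
with `a_r = 1/[r+1]^k`, and `Ĉ_n(x)` is the same transform at `-x` of `(-1)^r a_r`.
Expanding `(1 - e^{-t})^r e^{-xt}` binomially shows that its `t^m/m!` coefficient is
`(-1)^(m+r) r! S2(m,r,x)`, so `B_m(x) = ∑ (-1)^(m+r) S2(m,r,x) r! a_r`. Each identity is then one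
of the two inversions.
-/

theorem sum_range_succ_eq_of_eq_zero {M : Type*} [AddCommMonoid M] {m n : ℕ} (h : m ≤ n)
    {f : ℕ → M}
    (hf : ∀ r, m < r → f r = 0) : ∑ r ∈ range (m + 1), f r = ∑ r ∈ range (n + 1), f r :=
  sum_subset (range_subset_range.2 (by omega)) fun r _ hr => hf r (not_lt.1 (mt mem_range.2 hr))

theorem neg_one_pow_mul_self {R : Type*} [Monoid R] [HasDistribNeg R] (n : ℕ) :
    (-1 : R) ^ n * (-1) ^ n = 1 := by
  rw [← pow_add, ← two_mul, pow_mul, neg_one_sq, one_pow]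

section Polynomial

open Polynomial

theorem stirling1_eq_stirlingFirst : stirling1 = Nat.stirlingFirst := by
  ext n m
  induction n generalizing m with
  | zero => cases m <;> rfl
  | succ n ih => cases m <;> simp [stirling1, Nat.stirlingFirst_succ_succ, ih]

theorem coeff_ascPochhammer (n m : ℕ) :
    (ascPochhammer ℝ n).coeff m = Nat.stirlingFirst n m := by
  induction n generalizing m with
  | zero => cases m <;> simp [coeff_one]
  | succ n ih =>
    rw [ascPochhammer_succ_right, ← C_eq_natCast, mul_add, coeff_add, coeff_mul_C]
    cases m with
    | zero => cases n <;> simp [ih]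
    | succ m =>
      rw [coeff_mul_X, ih, ih, Nat.stirlingFirst_succ_succ]
      push_cast
      ring

theorem coeff_comp_neg_X {R : Type*} [CommRing R] (p : R[X]) (n : ℕ) :
    (p.comp (-X)).coeff n = (-1) ^ n * p.coeff n := by
  induction p using Polynomial.induction_on' with
  | add p q hp hq => simp [add_comp, hp, hq, mul_add]
  | monomial k a =>
    rw [← C_mul_X_pow_eq_monomial, mul_comp, C_comp, X_pow_comp, neg_pow, ← C_1, ← C_neg,
      ← C_pow, ← mul_assoc, ← C_mul, coeff_C_mul_X_pow, coeff_C_mul_X_pow]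
    split_ifs with h
    · subst h; ring
    · simp

theorem stirling1W_eq_coeff_taylor (n m : ℕ) (x : ℝ) :
    stirling1W n m x = (taylor x (ascPochhammer ℝ n)).coeff m := by
  have hdeg : (hasseDeriv m (ascPochhammer ℝ n)).natDegree < n - m + 1 := by
    have := natDegree_hasseDeriv_le (ascPochhammer ℝ n) m
    rw [ascPochhammer_natDegree] at this
    omega
  rw [taylor_coeff, eval_eq_sum_range' hdeg, stirling1W]
  refine sum_congr rfl fun i _ => ?_
  rw [hasseDeriv_coeff, coeff_ascPochhammer, stirling1_eq_stirlingFirst, add_comm i m,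
    Nat.choose_symm_add]

theorem stirling1W_eq_zero_of_lt {n m : ℕ} (h : n < m) (x : ℝ) : stirling1W n m x = 0 := by
  rw [stirling1W_eq_coeff_taylor]
  exact coeff_eq_zero_of_natDegree_lt (by rwa [natDegree_taylor, ascPochhammer_natDegree])

theorem descPochhammer_comp_X_sub_C (m : ℕ) (x : ℝ) :
    (descPochhammer ℝ m).comp (X - C x) =
      C ((-1) ^ m) * (taylor x (ascPochhammer ℝ m)).comp (-X) := by
  refine Polynomial.funext fun y => ?_
  rw [eval_comp, eval_mul, eval_comp, taylor_eval, eval_C, eval_neg, eval_X, eval_sub, eval_X,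
    eval_C, show -y + x = -(y - x) by ring, ascPochhammer_eval_neg_eq_descPochhammer, ← mul_assoc,
    neg_one_pow_mul_self, one_mul]

theorem coeff_descPochhammer_comp_X_sub_C (m r : ℕ) (x : ℝ) :
    ((descPochhammer ℝ m).comp (X - C x)).coeff r = (-1) ^ (m + r) * stirling1W m r x := by
  rw [descPochhammer_comp_X_sub_C, coeff_C_mul, coeff_comp_neg_X, ← stirling1W_eq_coeff_taylor,
    pow_add, mul_assoc]

theorem factorial_mul_stirling2W (n m : ℕ) (x : ℝ) :
    (m.factorial : ℝ) * stirling2W n m x = (fwdDiff 1)^[m] (fun t : ℝ => (x + t) ^ n) 0 := by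
  rw [fwdDiff_iter_eq_sum_shift, stirling2W, ← mul_assoc, mul_one_div_cancel (by positivity),
    one_mul]
  refine sum_congr rfl fun j _ => ?_
  simp

theorem stirling2W_eq_zero_of_lt {n m : ℕ} (h : n < m) (x : ℝ) : stirling2W n m x = 0 := by
  have hdiff : (fwdDiff 1)^[m] (fun t : ℝ => (x + t) ^ n) = 0 := by
    have := Polynomial.fwdDiff_iter_eq_zero_of_degree_lt (P := (X + C x) ^ n)
      (by rwa [natDegree_pow_X_add_C])
    simpa [add_comm] using this
  have := factorial_mul_stirling2W n m x
  rw [hdiff] at this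
  simpa [Nat.factorial_ne_zero] using this

theorem eval_sum_stirling2W_mul_descPochhammer (n j : ℕ) (x : ℝ) :
    (∑ m ∈ range (n + 1), C (stirling2W n m x) * (descPochhammer ℝ m).comp (X - C x)).eval
      (x + j) = (x + j) ^ n := by
  -- Gregory–Newton, with `j.choose m • m! = j.descFactorial m = (descPochhammer ℝ m).eval j`
  have newton := shift_eq_sum_fwdDiff_iter 1 (fun t : ℝ => (x + t) ^ n) j 0
  simp only [zero_add, nsmul_one] at newton
  rw [newton, eval_finsetSum, sum_range_succ_eq_of_eq_zero (Nat.le_add_right n j),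
    sum_range_succ_eq_of_eq_zero (Nat.le_add_left j n)]
  · refine sum_congr rfl fun m _ => ?_
    rw [eval_mul, eval_C, eval_comp, eval_sub, eval_X, eval_C, add_sub_cancel_left,
      descPochhammer_eval_eq_descFactorial, Nat.descFactorial_eq_factorial_mul_choose,
      ← factorial_mul_stirling2W, nsmul_eq_mul]
    push_cast
    ring
  · intro m hm
    simp [Nat.choose_eq_zero_of_lt hm]
  · intro m hm
    simp [stirling2W_eq_zero_of_lt hm]

theorem X_pow_eq_sum_stirling2W_mul_descPochhammer (n : ℕ) (x : ℝ) :
    (X : ℝ[X]) ^ n =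
      ∑ m ∈ range (n + 1), C (stirling2W n m x) * (descPochhammer ℝ m).comp (X - C x) := by
  refine eq_of_infinite_eval_eq _ _ (Set.infinite_of_injective_forall_mem
    (f := fun j : ℕ => x + j) ((add_right_injective x).comp Nat.cast_injective) fun j => ?_)
  simp only [Set.mem_ofPred_eq, eval_pow, eval_X, eval_sum_stirling2W_mul_descPochhammer]

theorem sum_stirling2W_mul_stirling1W (n r : ℕ) (x : ℝ) :
    ∑ m ∈ range (n + 1), stirling2W n m x * ((-1) ^ (m + r) * stirling1W m r x) =
      if n = r then 1 else 0 := by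
  have := congrArg (coeff · r) (X_pow_eq_sum_stirling2W_mul_descPochhammer n x)
  simp only [coeff_X_pow, finsetSum_coeff, coeff_C_mul, coeff_descPochhammer_comp_X_sub_C] at this
  rw [← this]
  simp only [eq_comm]

end Polynomial

theorem sum_stirling1W_mul_stirling2W (n r : ℕ) (x : ℝ) :
    ∑ m ∈ range (n + 1), (-1) ^ (n + m) * stirling1W n m x * stirling2W m r x =
      if n = r then 1 else 0 := by
  rcases lt_or_ge n r with h | h
  · rw [if_neg h.ne]
    refine sum_eq_zero fun m hm => ?_
    rw [stirling2W_eq_zero_of_lt ((mem_range_succ_iff.1 hm).trans_lt h), mul_zero]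
  let S : Matrix (Fin (n + 1)) (Fin (n + 1)) ℝ := .of fun i j => stirling2W i j x
  let T : Matrix (Fin (n + 1)) (Fin (n + 1)) ℝ :=
    .of fun i j => (-1) ^ (i + j : ℕ) * stirling1W i j x
  have hST : S * T = 1 := by
    ext i j
    rw [Matrix.mul_apply, Matrix.one_apply]
    simp only [← Fin.val_inj, S, T, Matrix.of_apply]
    rw [← sum_stirling2W_mul_stirling1W, sum_range_succ_eq_of_eq_zero (Nat.le_of_lt_succ i.isLt)
      fun m hm => by rw [stirling2W_eq_zero_of_lt hm, zero_mul]]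
    exact Fin.sum_univ_eq_sum_range
      (fun m => stirling2W i m x * ((-1) ^ (m + j) * stirling1W m j x)) _
  -- a one-sided inverse of a square matrix is two-sided
  have hTS : (T * S) (Fin.last n) ⟨r, by omega⟩ =
      (1 : Matrix (Fin (n + 1)) (Fin (n + 1)) ℝ) (Fin.last n) ⟨r, by omega⟩ := by
    rw [mul_eq_one_comm.1 hST]
  rw [Matrix.mul_apply, Matrix.one_apply] at hTS
  simp only [← Fin.val_inj, S, T, Matrix.of_apply, Fin.val_last] at hTS
  rw [← hTS,
    ← Fin.sum_univ_eq_sum_range (fun m => (-1) ^ (n + m) * stirling1W n m x * stirling2W m r x)]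

theorem sum_stirling2W_mul_sum_stirling1W (n : ℕ) (x : ℝ) (a : ℕ → ℝ) :
    ∑ m ∈ range (n + 1), stirling2W n m x *
      ∑ r ∈ range (m + 1), (-1) ^ (m + r) * stirling1W m r x * a r = a n := by
  calc _ = ∑ m ∈ range (n + 1), ∑ r ∈ range (n + 1),
        a r * (stirling2W n m x * ((-1) ^ (m + r) * stirling1W m r x)) := by
        refine sum_congr rfl fun m hm => ?_
        rw [mul_sum, sum_range_succ_eq_of_eq_zero (mem_range_succ_iff.1 hm)
          fun r hr => by rw [stirling1W_eq_zero_of_lt hr, mul_zero, zero_mul, mul_zero]]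
        exact sum_congr rfl fun r _ => by ring
    _ = ∑ r ∈ range (n + 1), a r * if n = r then 1 else 0 := by
        rw [sum_comm]
        simp only [← mul_sum, sum_stirling2W_mul_stirling1W]
    _ = a n := by simp

theorem sum_stirling1W_mul_sum_stirling2W (n : ℕ) (x : ℝ) (b : ℕ → ℝ) :
    ∑ m ∈ range (n + 1), stirling1W n m x *
      ∑ r ∈ range (m + 1), (-1) ^ (m + r) * stirling2W m r x * b r = b n := by
  calc _ = ∑ m ∈ range (n + 1), ∑ r ∈ range (n + 1),
        (-1) ^ (n + r) * b r * ((-1) ^ (n + m) * stirling1W n m x * stirling2W m r x) := by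
        refine sum_congr rfl fun m hm => ?_
        rw [mul_sum, sum_range_succ_eq_of_eq_zero (mem_range_succ_iff.1 hm)
          fun r hr => by rw [stirling2W_eq_zero_of_lt hr, mul_zero, zero_mul, mul_zero]]
        refine sum_congr rfl fun r _ => ?_
        linear_combination
          -b r * stirling1W n m x * stirling2W m r x * (-1) ^ (m + r) *
            neg_one_pow_mul_self (R := ℝ) n
    _ = ∑ r ∈ range (n + 1), (-1) ^ (n + r) * b r * if n = r then 1 else 0 := by
        rw [sum_comm]
        simp only [← mul_sum, sum_stirling1W_mul_stirling2W]
    _ = b n := by simp [← two_mul, pow_mul]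

section PowerSeries

open PowerSeries

noncomputable def oneSubExpNeg : PowerSeries ℝ := 1 - rescale (-1) (exp ℝ)

theorem coeff_oneSubExpNeg_pow_of_lt {i r : ℕ} (h : i < r) : coeff i (oneSubExpNeg ^ r) = 0 := by
  obtain ⟨g, hg⟩ : X ∣ oneSubExpNeg :=
    X_dvd_iff.2 (by
      rw [oneSubExpNeg, map_sub, map_one, ← coeff_zero_eq_constantCoeff_apply, coeff_rescale]
      simp)
  rw [hg, mul_pow, coeff_X_pow_mul', if_neg (by omega)]

theorem coeff_pqBernSeries_mul (p q : ℝ) (k : ℤ) (G : PowerSeries ℝ) (m : ℕ) :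
    coeff m (pqBernSeries p q k * G) =
      ∑ r ∈ range (m + 1), coeff m (oneSubExpNeg ^ r * G) / pqInt p q (r + 1) ^ k := by
  simp only [coeff_mul, sum_div]
  rw [sum_comm]
  refine sum_congr rfl fun ij hij => ?_
  rw [pqBernSeries, coeff_mk, sum_mul,
    sum_range_succ_eq_of_eq_zero (HasAntidiagonal.antidiagonal.fst_le hij) fun r hr => by
      rw [← oneSubExpNeg, coeff_oneSubExpNeg_pow_of_lt hr, zero_div, zero_mul]]
  exact sum_congr rfl fun r _ => div_mul_eq_mul_div _ _ _

theorem factorial_mul_coeff_oneSubExpNeg_pow_mul_exp (m r : ℕ) (x : ℝ) :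
    (m.factorial : ℝ) * coeff m (oneSubExpNeg ^ r * rescale (-x) (exp ℝ)) =
      (-1) ^ (m + r) * ((r.factorial : ℝ) * stirling2W m r x) := by
  have hpow (j : ℕ) :
      rescale (-1) (exp ℝ) ^ j * rescale (-x) (exp ℝ) = rescale (-(x + j)) (exp ℝ) := by
    rw [← map_pow, exp_pow_eq_rescale_exp, rescale_rescale, exp_mul_exp_eq_exp_add,
      show (j : ℝ) * -1 + -x = -(x + j) by ring]
  have hterm (j : ℕ) :
      (-rescale (-1) (exp ℝ)) ^ j * 1 ^ (r - j) * (r.choose j : PowerSeries ℝ) *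
        rescale (-x) (exp ℝ) =
          ((-1) ^ j * r.choose j : ℝ) • rescale (-(x + j)) (exp ℝ) := by
    rw [neg_pow, ← hpow j, smul_eq_C_mul]
    simp only [one_pow, mul_one, map_mul, map_pow, map_neg, map_one, map_natCast]
    ring
  rw [oneSubExpNeg, sub_eq_neg_add, add_pow, sum_mul, map_sum]
  simp only [hterm, coeff_smul, coeff_rescale, coeff_exp]
  rw [stirling2W, ← mul_assoc (r.factorial : ℝ), mul_one_div_cancel (by positivity), one_mul,
    mul_sum, mul_sum]
  refine sum_congr rfl fun j hj => ?_
  obtain ⟨d, rfl⟩ := Nat.exists_eq_add_of_le (Nat.le_of_lt_succ (mem_range.1 hj))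
  simp only [Nat.add_sub_cancel_left, smul_eq_mul, neg_pow (x + j), map_div₀, map_one,
    map_natCast]
  field_simp
  linear_combination (-((j + d).choose j : ℝ) * (x + j) ^ m * (-1) ^ (m + j)) *
    neg_one_pow_mul_self (R := ℝ) d

end PowerSeries

theorem pqBern_eq_sum_stirling2W (p q : ℝ) (k : ℤ) (x : ℝ) {f : ℕ → ℝ}
    (hf : pqBernSeries p q k * PowerSeries.rescale (-x) (PowerSeries.exp ℝ) = egf f) (m : ℕ) :
    f m = ∑ r ∈ range (m + 1),
      (-1) ^ (m + r) * stirling2W m r x * ((r.factorial : ℝ) * (pqInt p q (r + 1) ^ k)⁻¹) := by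
  have h := congrArg (PowerSeries.coeff m) hf
  rw [egf, PowerSeries.coeff_mk, coeff_pqBernSeries_mul, eq_div_iff (by positivity)] at h
  rw [← h, sum_mul]
  refine sum_congr rfl fun r _ => ?_
  rw [div_mul_eq_mul_div, mul_comm, factorial_mul_coeff_oneSubExpNeg_pow_mul_exp]
  ring

theorem sum_mul_sum_choose_div (n : ℕ) (c d : ℕ → ℝ) (y : ℝ) :
    ∑ m ∈ range (n + 1), c m * ∑ l ∈ range (m + 1), (m.choose l : ℝ) * y ^ l / d (m - l) =
      ∑ r ∈ range (n + 1),
        (∑ i ∈ range (n - r + 1), ((r + i).choose i : ℝ) * c (r + i) * y ^ i) / d r := by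
  calc _ = ∑ m ∈ range (n + 1), ∑ k ∈ range (m + 1),
        ((k + (m - k)).choose (m - k) : ℝ) * c (k + (m - k)) * y ^ (m - k) / d k := by
        refine sum_congr rfl fun m _ => ?_
        rw [mul_sum, ← sum_range_reflect]
        refine sum_congr rfl fun k hk => ?_
        have hk : k ≤ m := Nat.le_of_lt_succ (mem_range.1 hk)
        rw [Nat.add_sub_cancel' hk, add_tsub_cancel_right, Nat.sub_sub_self (by omega)]
        ring
    _ = ∑ r ∈ range (n + 1), ∑ i ∈ range (n + 1 - r),
          ((r + i).choose i : ℝ) * c (r + i) * y ^ i / d r :=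
        sum_range_diag_flip _ fun k j => ((k + j).choose j : ℝ) * c (k + j) * y ^ j / d k
    _ = _ := by
        refine sum_congr rfl fun r hr => ?_
        rw [sum_div, Nat.sub_add_comm (Nat.le_of_lt_succ (mem_range.1 hr))]

theorem pqCauchy1_eq (p q : ℝ) (k : ℤ) (x : ℝ) (n : ℕ) :
    pqCauchy1 p q k x n =
      ∑ r ∈ range (n + 1),
        (-1) ^ (n + r) * stirling1W n r x * (pqInt p q (r + 1) ^ k)⁻¹ := by
  rw [pqCauchy1, sum_mul_sum_choose_div n (fun m => (-1) ^ (n - m) * (stirling1 n m : ℝ))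
    (fun r => pqInt p q (r + 1) ^ k)]
  refine sum_congr rfl fun r hr => ?_
  rw [div_eq_mul_inv, stirling1W, mul_sum]
  refine congrArg (· * _) (sum_congr rfl fun i hi => ?_)
  have hri : r + i ≤ n := by
    have := mem_range_succ_iff.1 hr
    have := mem_range_succ_iff.1 hi
    omega
  rw [neg_pow x, show (-1 : ℝ) ^ (n + r) = (-1) ^ (n - (r + i)) * (-1) ^ i from
    by rw [← pow_add]; exact neg_one_pow_congr (by
      rw [Nat.even_add, Nat.even_add, Nat.even_sub hri, Nat.even_add]; tauto)]
  ring

theorem pqCauchy2_eq (p q : ℝ) (k : ℤ) (x : ℝ) (n : ℕ) :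
    pqCauchy2 p q k x n =
      ∑ r ∈ range (n + 1),
        (-1) ^ (n + r) * stirling1W n r (-x) * ((-1) ^ r * (pqInt p q (r + 1) ^ k)⁻¹) := by
  rw [pqCauchy2, sum_mul_sum_choose_div n (fun m => (stirling1 n m : ℝ))
    (fun r => pqInt p q (r + 1) ^ k), mul_sum]
  refine sum_congr rfl fun r _ => ?_
  rw [← stirling1W, div_eq_mul_inv]
  linear_combination
    -(-1) ^ n * stirling1W n r (-x) * (pqInt p q (r + 1) ^ k)⁻¹ *
      neg_one_pow_mul_self (R := ℝ) r

theorem pq_inverse_relations_general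
    (p q : ℝ) (k : ℤ)
    (B : ℝ → ℕ → ℝ)
    (hB : ∀ x : ℝ,
      pqBernSeries p q k * PowerSeries.rescale (-x) (PowerSeries.exp ℝ) = egf (B x)) :
    ∀ (n : ℕ) (x : ℝ),
      (∑ m ∈ Finset.range (n + 1), stirling1W n m x * B x m =
          (n.factorial : ℝ) / pqInt p q (n + 1) ^ k) ∧
      (∑ m ∈ Finset.range (n + 1), stirling2W n m x * pqCauchy1 p q k x m =
          1 / pqInt p q (n + 1) ^ k) ∧
      (∑ m ∈ Finset.range (n + 1), stirling2W n m (-x) * pqCauchy2 p q k x m =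
          (-1 : ℝ) ^ n / pqInt p q (n + 1) ^ k) := by
  intro n x
  refine ⟨?_, ?_, ?_⟩
  · simp only [pqBern_eq_sum_stirling2W p q k x (hB x), div_eq_mul_inv]
    exact sum_stirling1W_mul_sum_stirling2W n x fun r => r.factorial * (pqInt p q (r + 1) ^ k)⁻¹
  · simp only [pqCauchy1_eq, one_div]
    exact sum_stirling2W_mul_sum_stirling1W n x fun r => (pqInt p q (r + 1) ^ k)⁻¹
  · simp only [pqCauchy2_eq, div_eq_mul_inv]
    exact sum_stirling2W_mul_sum_stirling1W n (-x) fun r => (-1) ^ r * (pqInt p q (r + 1) ^ k)⁻¹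

theorem pq_inverse_relations
    (p q : ℝ) (hq : 0 < q) (hqp : q < p) (hp : p ≤ 1) (k : ℤ)
    (B : ℝ → ℕ → ℝ)
    (hB : ∀ x : ℝ,
      pqBernSeries p q k * PowerSeries.rescale (-x) (PowerSeries.exp ℝ) = egf (B x)) :
    ∀ (n : ℕ) (x : ℝ),
      (∑ m ∈ Finset.range (n + 1), stirling1W n m x * B x m =
          (n.factorial : ℝ) / pqInt p q (n + 1) ^ k) ∧
      (∑ m ∈ Finset.range (n + 1), stirling2W n m x * pqCauchy1 p q k x m =
          1 / pqInt p q (n + 1) ^ k) ∧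
      (∑ m ∈ Finset.range (n + 1), stirling2W n m (-x) * pqCauchy2 p q k x m =
          (-1 : ℝ) ^ n / pqInt p q (n + 1) ^ k) :=
  pq_inverse_relations_general p q k B hB
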